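/- For any integer k ≥ 2 and any maximal repetitions r', r'' in a word w, at most one maximal repeat from PSP_k can be generated from the left by r' per r''. -/
import Mathlib


open scoped Classical

namespace Gapped

variable {α : Type*}

/-- `p` is a period of the factor `w[i..j]` of the word `w` (positions are 1-indexed). -/
def IsPeriod (w : ℕ → α) (i j p : ℕ) : Prop :=
  0 < p ∧ ∀ t, i ≤ t → t + p ≤ j → w t = w (t + p)

/-- The minimal period `p(w[i..j])` of the factor `w[i..j]`. -/
noncomputable def minPer (w : ℕ → α) (i j : ℕ) : ℕ :=
  sInf {p | IsPeriod w i j p}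

/-- The length of the factor `w[i..j]`. -/
def flen (i j : ℕ) : ℕ := j - i + 1

/-- The exponent `e(w[i..j]) = |w[i..j]| / p(w[i..j])` of the factor `w[i..j]`. -/
noncomputable def expo (w : ℕ → α) (i j : ℕ) : ℝ :=
  (flen i j : ℝ) / (minPer w i j : ℝ)

/-- `w[i..j]` is a valid factor of a word of length `n`. -/
def IsFactor (n i j : ℕ) : Prop := 1 ≤ i ∧ i ≤ j ∧ j ≤ n

/-- `w[i..j]` is a repetition: a factor of exponent at least 2. -/
def IsRep (w : ℕ → α) (n i j : ℕ) : Prop :=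
  IsFactor n i j ∧ 2 * minPer w i j ≤ flen i j

/-- `w[i..j]` is a maximal repetition in the word `w` of length `n`. -/
def MaxRep (w : ℕ → α) (n i j : ℕ) : Prop :=
  IsRep w n i j ∧
  (1 < i → w (i - 1) ≠ w (i - 1 + minPer w i j)) ∧
  (j < n → w (j + 1 - minPer w i j) ≠ w (j + 1))

/-- `w[i..j]` is a δ-subrepetition: `1 + δ ≤ e(w[i..j]) < 2`. -/
def IsSubrep (w : ℕ → α) (n : ℕ) (δ : ℝ) (i j : ℕ) : Prop :=
  IsFactor n i j ∧ 1 + δ ≤ expo w i j ∧ expo w i j < 2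

/-- `w[i..j]` is a maximal δ-subrepetition in the word `w` of length `n`. -/
def MaxSubrep (w : ℕ → α) (n : ℕ) (δ : ℝ) (i j : ℕ) : Prop :=
  IsSubrep w n δ i j ∧
  (1 < i → w (i - 1) ≠ w (i - 1 + minPer w i j)) ∧
  (j < n → w (j + 1 - minPer w i j) ≠ w (j + 1))

/-- `w[i..j]` is a maximal subrepetition (a maximal δ-subrepetition for some 0 < δ < 1). -/
def MaxSubrepAny (w : ℕ → α) (n i j : ℕ) : Prop :=
  ∃ δ : ℝ, 0 < δ ∧ δ < 1 ∧ MaxSubrep w n δ i j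

/-- Gapped repeat `(i1, j1, p)`: left copy `w[i1..j1]`, period `p`, right copy
`w[i1+p..j1+p]`; both copies are equal and the gap `w[j1+1..i1+p-1]` is nonempty
(`c(σ) = flen i1 j1 < p`). -/
def IsGapped (w : ℕ → α) (n i1 j1 p : ℕ) : Prop :=
  1 ≤ i1 ∧ i1 ≤ j1 ∧ flen i1 j1 < p ∧ j1 + p ≤ n ∧
  ∀ t, i1 ≤ t → t ≤ j1 → w t = w (t + p)

/-- Maximal gapped repeat: the copies cannot be extended to the left or right
with preserving the period. -/
def MaxGapped (w : ℕ → α) (n i1 j1 p : ℕ) : Prop :=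
  IsGapped w n i1 j1 p ∧
  (1 < i1 → w (i1 - 1) ≠ w (i1 - 1 + p)) ∧
  (j1 + p < n → w (j1 + 1) ≠ w (j1 + 1 + p))

/-- The gapped repeat `(i1, j1, p)` is `a`-gapped: `p(σ) ≤ a · c(σ)`. -/
def AlphaGapped (a : ℝ) (i1 j1 p : ℕ) : Prop :=
  (p : ℝ) ≤ a * (flen i1 j1 : ℝ)

/-- Maximal `a`-gapped repeat. -/
def MaxAlphaGapped (w : ℕ → α) (n : ℕ) (a : ℝ) (i1 j1 p : ℕ) : Prop :=
  MaxGapped w n i1 j1 p ∧ AlphaGapped a i1 j1 p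

/-- `w[I..J]` is the extension of the repetition `w[i..j]`: the maximal repetition
containing it with the same minimal period. -/
def IsExtension (w : ℕ → α) (n i j I J : ℕ) : Prop :=
  MaxRep w n I J ∧ I ≤ i ∧ j ≤ J ∧ minPer w I J = minPer w i j

/-- The gapped repeat `(i1, j1, p)` is periodic: both copies are repetitions. -/
def PeriodicGapped (w : ℕ → α) (n i1 j1 p : ℕ) : Prop :=
  IsRep w n i1 j1 ∧ IsRep w n (i1 + p) (j1 + p)

/-- The maximal gapped repeat `(i1, j1, p)` is a private repeat generated by the
maximal repetition `w[I..J]`: it is periodic and `w[I..J]` is the common extension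
of both copies. -/
def PrivateGenBy (w : ℕ → α) (n i1 j1 p I J : ℕ) : Prop :=
  MaxGapped w n i1 j1 p ∧ PeriodicGapped w n i1 j1 p ∧
  IsExtension w n i1 j1 I J ∧ IsExtension w n (i1 + p) (j1 + p) I J

/-- The maximal gapped repeat `(i1, j1, p)` is private. -/
def IsPrivate (w : ℕ → α) (n i1 j1 p : ℕ) : Prop :=
  ∃ I J, PrivateGenBy w n i1 j1 p I J

/-- `m` is a periodic-prefix length for the copy `w[i..j]`: the prefix of length `m`
is a repetition whose length is at least half of the copy length. -/
def PerPrefix (w : ℕ → α) (n i j m : ℕ) : Prop :=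
  1 ≤ m ∧ m ≤ flen i j ∧ IsRep w n i (i + m - 1) ∧ flen i j ≤ 2 * m

/-- `m` is a periodic-suffix length for the copy `w[i..j]`. -/
def PerSuffix (w : ℕ → α) (n i j m : ℕ) : Prop :=
  1 ≤ m ∧ m ≤ flen i j ∧ IsRep w n (j + 1 - m) j ∧ flen i j ≤ 2 * m

/-- `m` is the length of the periodic prefix (the longest prefix which is a repetition
of length at least half the copy length) of the copy `w[i..j]`. -/
def LongestPerPrefix (w : ℕ → α) (n i j m : ℕ) : Prop :=
  PerPrefix w n i j m ∧ ∀ m', PerPrefix w n i j m' → m' ≤ m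

/-- The gapped repeat `(i1, j1, p)` is prefix semiperiodic. -/
def PrefixSemi (w : ℕ → α) (n i1 j1 p : ℕ) : Prop :=
  ¬ IsRep w n i1 j1 ∧ ¬ IsRep w n (i1 + p) (j1 + p) ∧
  (∃ m, PerPrefix w n i1 j1 m) ∧ (∃ m, PerPrefix w n (i1 + p) (j1 + p) m)

/-- The gapped repeat `(i1, j1, p)` is suffix semiperiodic. -/
def SuffixSemi (w : ℕ → α) (n i1 j1 p : ℕ) : Prop :=
  ¬ IsRep w n i1 j1 ∧ ¬ IsRep w n (i1 + p) (j1 + p) ∧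
  (∃ m, PerSuffix w n i1 j1 m) ∧ (∃ m, PerSuffix w n (i1 + p) (j1 + p) m)

/-- The gapped repeat `(i1, j1, p)` is ordinary: neither periodic nor semiperiodic. -/
def Ordinary (w : ℕ → α) (n i1 j1 p : ℕ) : Prop :=
  ¬ PeriodicGapped w n i1 j1 p ∧ ¬ PrefixSemi w n i1 j1 p ∧ ¬ SuffixSemi w n i1 j1 p

/-- `(i1, j1, p)` belongs to `PSP_k`: it is a prefix semiperiodic maximal `k`-gapped repeat. -/
def InPSP (w : ℕ → α) (n k i1 j1 p : ℕ) : Prop :=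
  MaxGapped w n i1 j1 p ∧ AlphaGapped (k : ℝ) i1 j1 p ∧ PrefixSemi w n i1 j1 p

/-- The repeat `(i1, j1, p) ∈ PSP_k` is generated from the left by `w[I1..J1]` per
`w[I2..J2]`: these are the extensions of the periodic prefixes of the left and right
copies respectively, and `|w[I1..J1]| ≤ |w[I2..J2]|`. -/
def GenFromLeft (w : ℕ → α) (n k i1 j1 p I1 J1 I2 J2 : ℕ) : Prop :=
  InPSP w n k i1 j1 p ∧
  ∃ m, LongestPerPrefix w n i1 j1 m ∧ LongestPerPrefix w n (i1 + p) (j1 + p) m ∧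
    IsExtension w n i1 (i1 + m - 1) I1 J1 ∧
    IsExtension w n (i1 + p) (i1 + p + m - 1) I2 J2 ∧
    flen I1 J1 ≤ flen I2 J2

/-- The maximal repetition `w[I2..J2]` is left associated with the maximal repetition
`w[I1..J1]`: some repeat from `PSP_k` is generated from the left by `w[I1..J1]` per
`w[I2..J2]`. -/
def LeftAssociated (w : ℕ → α) (n k I1 J1 I2 J2 : ℕ) : Prop :=
  ∃ i1 j1 p, GenFromLeft w n k i1 j1 p I1 J1 I2 J2

/-- The periodic maximal `k`-gapped repeat `(i1, j1, p)` is non-private and is generated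
from the left by the maximal repetition `w[I..J]`: `w[I..J]` is the extension of the
left copy, the extension of the right copy is a different maximal repetition which is
not shorter. -/
def GenFromLeftPeriodic (w : ℕ → α) (n k i1 j1 p I J : ℕ) : Prop :=
  MaxGapped w n i1 j1 p ∧ AlphaGapped (k : ℝ) i1 j1 p ∧ PeriodicGapped w n i1 j1 p ∧
  IsExtension w n i1 j1 I J ∧
  ∃ I' J', IsExtension w n (i1 + p) (j1 + p) I' J' ∧ (I', J') ≠ (I, J) ∧
    flen I J ≤ flen I' J'

/-- `(i1, j1, p)` belongs to `OP_k`: it is an ordinary maximal `k`-gapped repeat. -/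
def InOP (w : ℕ → α) (n k i1 j1 p : ℕ) : Prop :=
  MaxGapped w n i1 j1 p ∧ AlphaGapped (k : ℝ) i1 j1 p ∧ Ordinary w n i1 j1 p

/-- The point `(j', p')` covers the point `(j'', p'')`. -/
def Covers (k : ℕ) (j' p' j'' p'' : ℕ) : Prop :=
  (p' : ℝ) - (p' : ℝ) / (4 * k) ≤ (p'' : ℝ) ∧ (p'' : ℝ) ≤ (p' : ℝ) ∧
  (j' : ℝ) - (p' : ℝ) / (3 * k) ≤ (j'' : ℝ) ∧ (j'' : ℝ) ≤ (j' : ℝ)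

/-- The maximal gapped repeat `(i1, j1, p)` is principal: it is the respective repeat
of some maximal subrepetition (which then spans `w[i1..j1+p]` and has minimal period `p`). -/
def Principal (w : ℕ → α) (n i1 j1 p : ℕ) : Prop :=
  ∃ δ : ℝ, 0 < δ ∧ δ < 1 ∧ MaxSubrep w n δ i1 (j1 + p) ∧ minPer w i1 (j1 + p) = p

/-- The gapped repeat `(i1, j1, p)` is stretched by the maximal repetition `w[I..J]`. -/
def StretchedByRep (w : ℕ → α) (n i1 j1 p I J : ℕ) : Prop :=
  MaxRep w n I J ∧ I ≤ i1 ∧ j1 + p ≤ J ∧ minPer w I J < p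

/-- The gapped repeat `(i1, j1, p)` is stretched by the maximal subrepetition `w[I..J]`. -/
def StretchedBySub (w : ℕ → α) (n i1 j1 p I J : ℕ) : Prop :=
  MaxSubrepAny w n I J ∧ I ≤ i1 ∧ j1 + p ≤ J ∧ minPer w I J < p

/-- The gapped repeat `(i1, j1, p)` is stretchable. -/
def Stretchable (w : ℕ → α) (n i1 j1 p : ℕ) : Prop :=
  ∃ I J, StretchedByRep w n i1 j1 p I J ∨ StretchedBySub w n i1 j1 p I J

/-- `u` (with letters at positions `1..m`) is a primitive word of length `m`:
its exponent is not an integer greater than 1. -/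
def Primitive (u : ℕ → α) (m : ℕ) : Prop :=
  ¬ (minPer u 1 m ∣ m ∧ minPer u 1 m < m)

/-- There is an occurrence of the square `uu` (where `|u| = m`) at position `i` in the
word `w` of length `n`. -/
def OccSquare (w : ℕ → α) (n : ℕ) (u : ℕ → α) (m i : ℕ) : Prop :=
  1 ≤ i ∧ i + 2 * m - 1 ≤ n ∧
  ∀ t, 1 ≤ t → t ≤ m → w (i + t - 1) = u t ∧ w (i + m + t - 1) = u t

/-- `E(w)`: the sum of exponents of all maximal repetitions in the word `w` of length `n`. -/
noncomputable def Ew (w : ℕ → α) (n : ℕ) : ℝ :=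
  ∑ r ∈ (Finset.Icc 1 n ×ˢ Finset.Icc 1 n).filter (fun r => MaxRep w n r.1 r.2),
    expo w r.1 r.2

lemma isPeriod_anti {w : ℕ → α} {I J i j q : ℕ} (h : IsPeriod w I J q)
    (hIi : I ≤ i) (hjJ : j ≤ J) : IsPeriod w i j q :=
  ⟨h.1, fun t ht htj => h.2 t (hIi.trans ht) (htj.trans hjJ)⟩

lemma minPer_isPeriod (w : ℕ → α) {i j : ℕ} (hij : i ≤ j) :
    IsPeriod w i j (minPer w i j) := by
  have hmem : (j - i + 1) ∈ {p | IsPeriod w i j p} :=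
    ⟨by omega, fun t ht htj => absurd htj (by omega)⟩
  exact Nat.sInf_mem ⟨_, hmem⟩

lemma minPer_le {w : ℕ → α} {i j p : ℕ} (h : IsPeriod w i j p) : minPer w i j ≤ p :=
  Nat.sInf_le h

lemma maxGapped_j_eq {w : ℕ → α} {n i1 j1 j1' p : ℕ}
    (h : MaxGapped w n i1 j1 p) (h' : MaxGapped w n i1 j1' p) : j1 = j1' := by
  by_contra hne
  wlog hlt : j1 < j1' generalizing j1 j1'
  · exact this h' h (Ne.symm hne) (by omega)
  have hn : j1' + p ≤ n := h'.1.2.2.2.1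
  have h1 := h.2.2 (by omega)
  have h2 := h'.1.2.2.2.2 (j1 + 1) (by have := h.1.2.1; omega) (by omega)
  exact h1 h2

lemma genFromLeft_spec {w : ℕ → α} {n k i1 j1 p I1 J1 I2 J2 : ℕ}
    (h : GenFromLeft w n k i1 j1 p I1 J1 I2 J2) :
    i1 = max I1 (I2 - p) ∧ J1 + p = J2 := by
  obtain ⟨⟨⟨hgap, hmaxL, hmaxR⟩, halpha, hnrepL, hnrepR, _⟩,
    m, ⟨hppL, hlongL⟩, ⟨hppR, hlongR⟩, hextL, hextR, hlenIJ⟩ := h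
  obtain ⟨h1i, hij, hflen0, hjn, hper⟩ := hgap
  have hflen : j1 - i1 + 1 < p := hflen0
  have hm1 : 1 ≤ m := hppL.1
  have hmflen : m ≤ j1 - i1 + 1 := hppL.2.1
  -- the copies are not full repetitions, so m < flen
  have hmlt : i1 + m ≤ j1 := by
    rcases Nat.lt_or_ge (i1 + m) (j1 + 1) with h' | h'
    · omega
    · exfalso
      apply hnrepL
      have he : i1 + m - 1 = j1 := by omega
      exact he ▸ hppL.2.2.1
  obtain ⟨⟨⟨hfacL, hrepL⟩, _, _⟩, hI1le, hleJ1, hminL⟩ := hextL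
  obtain ⟨⟨⟨hfacR, hrepR⟩, _, _⟩, hI2le, hleJ2, hminR⟩ := hextR
  have hqper : IsPeriod w I1 J1 (minPer w I1 J1) := minPer_isPeriod w hfacL.2.1
  have hq2per : IsPeriod w I2 J2 (minPer w I2 J2) := minPer_isPeriod w hfacR.2.1
  have hflL : flen i1 (i1 + m - 1) = m := by simp only [flen]; omega
  have hflR : flen (i1 + p) (i1 + p + m - 1) = m := by simp only [flen]; omega
  have hq2 : 2 * minPer w I1 J1 ≤ m := by
    have h2 := hppL.2.2.1.2
    rw [hflL] at h2
    rw [hminL]; exact h2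
  have hq2' : 2 * minPer w I2 J2 ≤ m := by
    have h2 := hppR.2.2.1.2
    rw [hflR] at h2
    rw [hminR]; exact h2
  have hq0 : 0 < minPer w I1 J1 := hqper.1
  have hq0' : 0 < minPer w I2 J2 := hq2per.1
  -- J1 is the end of the periodic prefix of the left copy
  have hJ1 : i1 + m - 1 = J1 := by
    by_contra hne
    have hlt : i1 + m ≤ J1 := by omega
    have e1 : i1 + (m + 1) - 1 = i1 + m := by omega
    have hpp' : PerPrefix w n i1 j1 (m + 1) := by
      refine ⟨by omega, by simp only [flen]; omega, ?_, ?_⟩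
      · rw [e1]
        refine ⟨⟨h1i, by omega, ?_⟩, ?_⟩
        · have := hfacL.2.2; omega
        · have hsub : IsPeriod w i1 (i1 + m) (minPer w I1 J1) :=
            isPeriod_anti hqper hI1le hlt
          have hle := minPer_le hsub
          have hfl2 : flen i1 (i1 + m) = m + 1 := by simp only [flen]; omega
          rw [hfl2]; omega
      · have h2 := hppL.2.2.2
        simp only [flen] at h2 ⊢; omega
    have := hlongL _ hpp'
    omega
  -- J2 is the end of the periodic prefix of the right copy
  have hJ2 : i1 + p + m - 1 = J2 := by
    by_contra hne
    have hlt : i1 + p + m ≤ J2 := by omega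
    have e1 : i1 + p + (m + 1) - 1 = i1 + p + m := by omega
    have hpp' : PerPrefix w n (i1 + p) (j1 + p) (m + 1) := by
      refine ⟨by omega, by simp only [flen]; omega, ?_, ?_⟩
      · rw [e1]
        refine ⟨⟨by omega, by omega, ?_⟩, ?_⟩
        · have := hfacR.2.2; omega
        · have hsub : IsPeriod w (i1 + p) (i1 + p + m) (minPer w I2 J2) :=
            isPeriod_anti hq2per hI2le hlt
          have hle := minPer_le hsub
          have hfl2 : flen (i1 + p) (i1 + p + m) = m + 1 := by simp only [flen]; omega
          rw [hfl2]; omega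
      · have h2 := hppR.2.2.2
        simp only [flen] at h2 ⊢; omega
    have := hlongR _ hpp'
    omega
  -- the periodic prefixes of the two copies have the same minimal period
  have hqq : minPer w i1 (i1 + m - 1) = minPer w (i1 + p) (i1 + p + m - 1) := by
    unfold minPer
    congr 1
    ext r
    simp only [Set.mem_setOf_eq]
    constructor
    · rintro ⟨hr0, hr⟩
      refine ⟨hr0, fun t ht htr => ?_⟩
      have hs : w (t - p) = w (t - p + r) := hr (t - p) (by omega) (by omega)
      have hh1 : w (t - p) = w (t - p + p) := hper (t - p) (by omega) (by omega)
      have hh2 : w (t - p + r) = w (t - p + r + p) := hper (t - p + r) (by omega) (by omega)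
      have ee1 : t - p + p = t := by omega
      have ee2 : t - p + r + p = t + r := by omega
      rw [ee1] at hh1; rw [ee2] at hh2
      rw [← hh1, hs, hh2]
    · rintro ⟨hr0, hr⟩
      refine ⟨hr0, fun t ht htr => ?_⟩
      have hs : w (t + p) = w (t + p + r) := hr (t + p) (by omega) (by omega)
      have hh1 : w t = w (t + p) := hper t (by omega) (by omega)
      have hh2 : w (t + r) = w (t + r + p) := hper (t + r) (by omega) (by omega)
      have ee : t + p + r = t + r + p := by omega
      rw [hh1, hs, ee, ← hh2]
  -- at least one copy starts where its prefix extension starts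
  have hstart : i1 = I1 ∨ i1 + p = I2 := by
    by_contra hcon
    push_neg at hcon
    have hI1lt : I1 < i1 := by omega
    have hI2lt : I2 < i1 + p := by omega
    have h1 : w (i1 - 1) = w (i1 - 1 + minPer w I1 J1) :=
      hqper.2 (i1 - 1) (by omega) (by omega)
    have h2 : w (i1 - 1 + minPer w I1 J1) = w (i1 - 1 + minPer w I1 J1 + p) :=
      hper (i1 - 1 + minPer w I1 J1) (by omega) (by omega)
    have hq2eq : minPer w I2 J2 = minPer w I1 J1 := by
      rw [hminR, ← hqq, ← hminL]
    have h3 : w (i1 + p - 1) = w (i1 + p - 1 + minPer w I1 J1) := by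
      have := hq2per.2 (i1 + p - 1) (by omega) (by rw [hq2eq]; omega)
      rw [hq2eq] at this; exact this
    have hI11 : 1 ≤ I1 := hfacL.1
    have hneq := hmaxL (by omega)
    apply hneq
    have he2 : i1 - 1 + p = i1 + p - 1 := by omega
    have he : i1 - 1 + minPer w I1 J1 + p = i1 + p - 1 + minPer w I1 J1 := by omega
    rw [he2, h1, h2, he, ← h3]
  constructor
  · rcases hstart with h | h <;> omega
  · omega

/-- For any maximal repetitions `w[I1..J1]`, `w[I2..J2]`, at most one maximal repeat
from `PSP_k` can be generated from the left by `w[I1..J1]` per `w[I2..J2]`. -/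
theorem genFromLeft_unique (w : ℕ → α) (n k : ℕ) (hk : 2 ≤ k) (I1 J1 I2 J2 : ℕ)
    (σ τ : ℕ × ℕ × ℕ)
    (hσ : GenFromLeft w n k σ.1 σ.2.1 σ.2.2 I1 J1 I2 J2)
    (hτ : GenFromLeft w n k τ.1 τ.2.1 τ.2.2 I1 J1 I2 J2) :
    σ = τ := by
  obtain ⟨a, b, c⟩ := σ
  obtain ⟨a', b', c'⟩ := τ
  obtain ⟨hi0, hJ0⟩ := genFromLeft_spec hσ
  obtain ⟨hi0', hJ0'⟩ := genFromLeft_spec hτ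
  have hi : a = max I1 (I2 - c) := hi0
  have hi' : a' = max I1 (I2 - c') := hi0'
  have hJ : J1 + c = J2 := hJ0
  have hJ' : J1 + c' = J2 := hJ0'
  have hp : c = c' := by omega
  subst hp
  have ha : a = a' := by omega
  subst ha
  have hb : b = b' := maxGapped_j_eq hσ.1.1 hτ.1.1
  rw [hb]

end Gapped
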